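/- arXiv:1602.02063 — 2 statements merged into one kernel-verified Lean document; each statement's English description precedes it below -/
import Mathlib

section
/- Assume U is monotone and the rows of P are sorted by strength: P i l ≥ P j l for all 1 ≤ i ≤ j ≤ m and all 1 ≤ l ≤ n. Let (X,Y,w) be a state with |X| = |Y| = k < T, let u be the (T−k)-th smallest element of {1,…,m}∖X, and let v ∈ {1,…,m}∖X with v > u (so v is not among the T−k smallest elements of {1,…,m}∖X). Then for every j ∈ {1,…,n}∖Y: P u j·V(X∪{u},Y∪{j},w+1) + (1−P u j)·V(X∪{u},Y∪{j},w) ≥ P v j·V(X∪{v},Y∪{j},w+1) + (1−P v j)·V(X∪{v},Y∪{j},w). In other words, in the one-round matrix game at state (X,Y,w), the row of the rank-(T−k) remaining player of Team 1 dominates the row of any remaining player that is not among the top T−k. -/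
/-!
With `r` rounds left, only the `r` strongest remaining players of Team 1 matter. A mixed
strategy on a larger pool is transported onto those `r` players by sending every player
outside them to the weakest of them: the substitute is at least as strong, and afterwards
the `r - 1` strongest of what remains are still available, so induction on `r` applies.
Together with monotonicity of the value in the pool and in the number of wins, this shows
that after `u` or any weaker `v` has played, the value is that of the pool of the players
of `Xᶜ` stronger than `u`; the one-round comparison then follows from `P v j ≤ P u j`.
-/

/-- Value function of the team competition `G(T,P,U)`, by backward induction.
`gval m n P U r X Y w` is the value of the state where the players in `X` (Team 1)
and `Y` (Team 2) have already played, Team 1 has won `w` rounds so far, and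
`r = T - |X|` rounds remain to be played.  The value of the whole game is
`gval m n P U T ∅ ∅ 0`. -/
noncomputable def gval (m n : ℕ) (P : Fin m → Fin n → ℝ) (U : ℕ → ℝ) :
    ℕ → Finset (Fin m) → Finset (Fin n) → ℕ → ℝ
  | 0, _, _, w => U w
  | r + 1, X, Y, w =>
      sSup {v : ℝ | ∃ p : Fin m → ℝ,
        (∀ i, 0 ≤ p i) ∧ (∀ i ∈ X, p i = 0) ∧ (∑ i, p i) = 1 ∧
        v = sInf {u : ℝ | ∃ j, j ∉ Y ∧
          u = ∑ i, p i *
            (P i j * gval m n P U r (insert i X) (insert j Y) (w + 1) +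
             (1 - P i j) * gval m n P U r (insert i X) (insert j Y) w)}}

open Finset

section MatrixGame

variable {ι κ : Type*} [Fintype ι] [Fintype κ]

noncomputable def guarantee (Y : Finset κ) (f : ι → κ → ℝ) (p : ι → ℝ) : ℝ :=
  sInf {u : ℝ | ∃ j, j ∉ Y ∧ u = ∑ i, p i * f i j}

noncomputable def gameValue (X : Finset ι) (Y : Finset κ) (f : ι → κ → ℝ) : ℝ :=
  sSup {v : ℝ | ∃ p : ι → ℝ, (∀ i, 0 ≤ p i) ∧ (∀ i ∈ X, p i = 0) ∧ (∑ i, p i) = 1 ∧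
    v = guarantee Y f p}

theorem guarantee_le_sum {Y : Finset κ} (f : ι → κ → ℝ) (p : ι → ℝ) {j : κ} (hj : j ∉ Y) :
    guarantee Y f p ≤ ∑ i, p i * f i j := by
  refine csInf_le ?_ ⟨j, hj, rfl⟩
  refine ((Set.finite_range fun j => ∑ i, p i * f i j).subset ?_).bddBelow
  rintro _ ⟨j, -, rfl⟩
  exact ⟨j, rfl⟩

theorem guarantee_le_guarantee {Y : Finset κ} {f g : ι → κ → ℝ} {p q : ι → ℝ}
    (h : ∀ j ∉ Y, ∑ i, p i * f i j ≤ ∑ i, q i * g i j) :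
    guarantee Y f p ≤ guarantee Y g q := by
  by_cases hY : ∃ j, j ∉ Y
  · obtain ⟨j₀, hj₀⟩ := hY
    refine le_csInf ⟨_, j₀, hj₀, rfl⟩ ?_
    rintro _ ⟨j, hj, rfl⟩
    exact (guarantee_le_sum f p hj).trans (h j hj)
  · push Not at hY
    simp [guarantee, hY]

theorem guarantee_le_sum_abs {Y : Finset κ} (f : ι → κ → ℝ) {p : ι → ℝ}
    (hp : ∀ i, 0 ≤ p i) (hp1 : ∑ i, p i = 1) :
    guarantee Y f p ≤ ∑ i, ∑ j, |f i j| := by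
  by_cases hY : ∃ j, j ∉ Y
  · obtain ⟨j₀, hj₀⟩ := hY
    calc guarantee Y f p ≤ ∑ i, p i * f i j₀ := guarantee_le_sum f p hj₀
      _ ≤ ∑ i, p i * ∑ i', ∑ j, |f i' j| := by
          gcongr with i
          · exact hp i
          · exact (le_abs_self _).trans <| (single_le_sum (fun j _ => abs_nonneg (f i j))
              (mem_univ j₀)).trans <| single_le_sum (f := fun i => ∑ j, |f i j|)
              (fun i _ => sum_nonneg fun j _ => abs_nonneg _) (mem_univ i)
      _ = ∑ i, ∑ j, |f i j| := by rw [← sum_mul, hp1, one_mul]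
  · push Not at hY
    simp only [guarantee, hY, not_true_eq_false, false_and, exists_false, Set.ofPred_false,
      Real.sInf_empty]
    positivity

theorem gameValue_le_gameValue {X X' : Finset ι} {Y : Finset κ}
    {f g : ι → κ → ℝ} (φ : ι → ι) (hX' : ∃ i, i ∉ X') (hφ : ∀ i ∉ X', φ i ∉ X)
    (hfg : ∀ i ∉ X', ∀ j ∉ Y, f i j ≤ g (φ i) j) :
    gameValue X' Y f ≤ gameValue X Y g := by
  classical
  obtain ⟨i₀, hi₀⟩ := hX'
  refine csSup_le ⟨_, Pi.single i₀ 1, fun i => ?_, fun i hi => ?_, by simp, rfl⟩ ?_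
  · by_cases h : i = i₀ <;> simp [h]
  · exact Pi.single_eq_of_ne (by rintro rfl; exact hi₀ hi) _
  rintro _ ⟨p, hp, hpX', hp1, rfl⟩
  -- push `p` forward along `φ`
  set q : ι → ℝ := fun x => ∑ i with φ i = x, p i
  have hpush : ∀ h : ι → ℝ, ∑ x, q x * h x = ∑ i, p i * h (φ i) := fun h => by
    simp only [q, sum_mul]
    rw [← sum_fiberwise univ φ fun i => p i * h (φ i)]
    refine sum_congr rfl fun x _ => sum_congr rfl fun i hi => ?_
    rw [(mem_filter.1 hi).2]
  have hqX : ∀ x ∈ X, q x = 0 := fun x hx => sum_eq_zero fun i hi => by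
    by_contra hpi
    exact hφ i (fun h => hpi (hpX' i h)) ((mem_filter.1 hi).2 ▸ hx)
  have hq1 : ∑ x, q x = 1 := by simpa [hp1] using hpush fun _ => 1
  have hbdd : BddAbove {v : ℝ | ∃ q : ι → ℝ, (∀ i, 0 ≤ q i) ∧ (∀ i ∈ X, q i = 0) ∧
      (∑ i, q i) = 1 ∧ v = guarantee Y g q} := by
    refine ⟨∑ i, ∑ j, |g i j|, ?_⟩
    rintro _ ⟨q, hq, -, hq1, rfl⟩
    exact guarantee_le_sum_abs g hq hq1
  refine (guarantee_le_guarantee fun j hj => ?_).trans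
    (le_csSup hbdd ⟨q, fun x => sum_nonneg fun i _ => hp i, hqX, hq1, rfl⟩)
  rw [hpush fun x => g x j]
  refine sum_le_sum fun i _ => ?_
  by_cases hi : i ∈ X'
  · simp [hpX' i hi]
  · exact mul_le_mul_of_nonneg_left (hfg i hi j hj) (hp i)

end MatrixGame

theorem monotoneOn_Iic_of_le_succ {α : Type*} [Preorder α] {f : ℕ → α} {N : ℕ}
    (hf : ∀ n < N, f n ≤ f (n + 1)) : MonotoneOn f (Set.Iic N) := by
  intro a _ b hb hab
  induction b, hab using Nat.le_induction with
  | base => exact le_rfl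
  | succ b _ ih =>
    have hbN : b + 1 ≤ N := hb
    exact (ih (show b ≤ N by omega)).trans (hf b hbN)

theorem mul_add_one_sub_mul_le {p q a b a' b' : ℝ} (hp : 0 ≤ p) (hp1 : p ≤ 1) (hpq : p ≤ q)
    (ha : a ≤ a') (hb : b ≤ b') (hba' : b' ≤ a') :
    p * a + (1 - p) * b ≤ q * a' + (1 - q) * b' := by
  nlinarith [mul_nonneg (sub_nonneg.2 hpq) (sub_nonneg.2 hba')]

theorem le_card_compl_insert {α : Type*} [Fintype α] [DecidableEq α] {X : Finset α} {r : ℕ}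
    (h : r + 1 ≤ Xᶜ.card) (a : α) : r ≤ (insert a X)ᶜ.card := by
  rw [compl_insert]
  have := pred_card_le_card_erase (s := Xᶜ) (a := a)
  omega

section Competition

variable {m n : ℕ} {P : Fin m → Fin n → ℝ} {U : ℕ → ℝ}

variable (P U) in
noncomputable def stagePayoff (r : ℕ) (X : Finset (Fin m)) (Y : Finset (Fin n)) (w : ℕ)
    (i : Fin m) (j : Fin n) : ℝ :=
  P i j * gval m n P U r (insert i X) (insert j Y) (w + 1) +
    (1 - P i j) * gval m n P U r (insert i X) (insert j Y) w

theorem gval_succ (r : ℕ) (X : Finset (Fin m)) (Y : Finset (Fin n)) (w : ℕ) :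
    gval m n P U (r + 1) X Y w = gameValue X Y (stagePayoff P U r X Y w) := rfl

theorem gval_le_gval_of_subset (hP : ∀ i j, P i j ∈ Set.Icc (0 : ℝ) 1) {N : ℕ}
    (hU : MonotoneOn U (Set.Iic N)) (r : ℕ) {X X' : Finset (Fin m)} {Y : Finset (Fin n)}
    {w w' : ℕ} (hw : w' ≤ w) (hwN : w + r ≤ N) (hXX' : X ⊆ X') (hr : r ≤ X'ᶜ.card) :
    gval m n P U r X' Y w' ≤ gval m n P U r X Y w := by
  induction r generalizing X X' Y w w' with
  | zero => exact hU (show w' ≤ N by omega) (show w ≤ N by omega) hw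
  | succ r ih =>
    obtain ⟨i₀, hi₀⟩ := card_pos.1 (show 0 < X'ᶜ.card by omega)
    rw [gval_succ, gval_succ]
    refine gameValue_le_gameValue id ⟨i₀, mem_compl.1 hi₀⟩ (fun i hi h => hi (hXX' h))
      fun i hi j _ => ?_
    obtain ⟨hP0, hP1⟩ := hP i j
    have hsub : insert i X ⊆ insert i X' := insert_subset_insert i hXX'
    have hr' := le_card_compl_insert hr i
    exact add_le_add (mul_le_mul_of_nonneg_left (ih (by omega) (by omega) hsub hr') hP0)
      (mul_le_mul_of_nonneg_left (ih hw (by omega) hsub hr') (sub_nonneg.2 hP1))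

theorem gval_le_gval_of_subset_of_forall_le (hP : ∀ i j, P i j ∈ Set.Icc (0 : ℝ) 1)
    (hsorted : ∀ i j : Fin m, i ≤ j → ∀ l : Fin n, P j l ≤ P i l) {N : ℕ}
    (hU : MonotoneOn U (Set.Iic N)) (r : ℕ) {X X' : Finset (Fin m)} {Y : Finset (Fin n)}
    {w : ℕ} (hwN : w + r ≤ N) (hXX' : X ⊆ X') (hlow : ∀ a ∉ X', ∀ b ∈ X' \ X, a ≤ b)
    (hr : r ≤ X'ᶜ.card) :
    gval m n P U r X Y w ≤ gval m n P U r X' Y w := by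
  induction r generalizing X X' Y w with
  | zero => exact le_rfl
  | succ r ih =>
    have hne : X'ᶜ.Nonempty := card_pos.1 (by omega)
    set t := X'ᶜ.max' hne
    have ht : t ∉ X' := mem_compl.1 (max'_mem _ _)
    rw [gval_succ, gval_succ]
    refine gameValue_le_gameValue (fun i => if i ∈ X' then t else i)
      ⟨t, fun h => ht (hXX' h)⟩ (fun i _ => by split_ifs with h <;> assumption)
      fun i hi j _ => ?_
    obtain ⟨hP0, hP1⟩ := hP i j
    split_ifs with hiX'
    · have hti : t ≤ i := hlow t ht i (mem_sdiff.2 ⟨hiX', hi⟩)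
      have hsub : insert i X ⊆ insert t X' :=
        (insert_subset hiX' hXX').trans (subset_insert t X')
      have hlow' : ∀ a ∉ insert t X', ∀ b ∈ insert t X' \ insert i X, a ≤ b := by
        intro a ha b hb
        rw [mem_insert, not_or] at ha
        obtain ⟨hbt, hbi⟩ := mem_sdiff.1 hb
        rcases mem_insert.1 hbt with rfl | hbX'
        · exact le_max' _ a (mem_compl.2 ha.2)
        · exact hlow a ha.2 b (mem_sdiff.2 ⟨hbX', fun h => hbi (mem_insert_of_mem h)⟩)
      have hr' := le_card_compl_insert hr t
      exact mul_add_one_sub_mul_le hP0 hP1 (hsorted t i hti j)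
        (ih (by omega) hsub hlow' hr') (ih (by omega) hsub hlow' hr')
        (gval_le_gval_of_subset hP hU r (Nat.le_succ w) (by omega) subset_rfl hr')
    · have hlow' : ∀ a ∉ insert i X', ∀ b ∈ insert i X' \ insert i X, a ≤ b := by
        intro a ha b hb
        rw [mem_insert, not_or] at ha
        rw [mem_sdiff, mem_insert, mem_insert, not_or] at hb
        obtain ⟨hbi | hbX', hbi', hbX⟩ := hb
        · exact absurd hbi hbi'
        · exact hlow a ha.2 b (mem_sdiff.2 ⟨hbX', hbX⟩)
      have hsub : insert i X ⊆ insert i X' := insert_subset_insert i hXX'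
      have hr' := le_card_compl_insert hr i
      exact add_le_add (mul_le_mul_of_nonneg_left (ih (by omega) hsub hlow' hr') hP0)
        (mul_le_mul_of_nonneg_left (ih (by omega) hsub hlow' hr') (sub_nonneg.2 hP1))

theorem gval_insert_le_gval_insert (hP : ∀ i j, P i j ∈ Set.Icc (0 : ℝ) 1)
    (hsorted : ∀ i j : Fin m, i ≤ j → ∀ l : Fin n, P j l ≤ P i l) {N : ℕ}
    (hU : MonotoneOn U (Set.Iic N)) {r : ℕ} {X : Finset (Fin m)} {u v : Fin m}
    (hr : r + 1 ≤ (Xᶜ.filter (· ≤ u)).card) (huv : u ≤ v) (Y : Finset (Fin n)) {w : ℕ}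
    (hwN : w + r ≤ N) :
    gval m n P U r (insert v X) Y w ≤ gval m n P U r (insert u X) Y w := by
  -- after `u` or `v` has played, the `r` strongest players left are those of `Xᶜ` above `u`
  set L := (Xᶜ.filter (· < u))ᶜ
  have hrL : r ≤ Lᶜ.card := by
    rw [compl_compl]
    have : (Xᶜ.filter (· ≤ u)).card - 1 ≤ (Xᶜ.filter (· < u)).card := by
      refine (pred_card_le_card_erase (a := u)).trans (card_le_card fun x hx => ?_)
      obtain ⟨hxu, hx⟩ := mem_erase.1 hx
      exact mem_filter.2 ⟨(mem_filter.1 hx).1, lt_of_le_of_ne (mem_filter.1 hx).2 hxu⟩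
    omega
  have hmemL : ∀ x, u ≤ x → x ∈ L := fun x hx =>
    mem_compl.2 fun h => (mem_filter.1 h).2.not_ge hx
  have huL : insert u X ⊆ L := insert_subset (hmemL u le_rfl) fun x hx =>
    mem_compl.2 fun h => mem_compl.1 (mem_filter.1 h).1 hx
  have hvL : insert v X ⊆ L := insert_subset (hmemL v huv) (huL.trans' (subset_insert u X))
  have hlow : ∀ a ∉ L, ∀ b ∈ L \ insert v X, a ≤ b := by
    intro a ha b hb
    rw [mem_compl, not_not, mem_filter] at ha
    obtain ⟨hbL, hbvX⟩ := mem_sdiff.1 hb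
    have hbX : b ∈ Xᶜ := mem_compl.2 fun h => hbvX (mem_insert_of_mem h)
    exact ha.2.le.trans (not_lt.1 fun h => mem_compl.1 hbL (mem_filter.2 ⟨hbX, h⟩))
  exact (gval_le_gval_of_subset_of_forall_le hP hsorted hU r hwN hvL hlow hrL).trans
    (gval_le_gval_of_subset hP hU r le_rfl hwN huL hrL)

end Competition

theorem rank_player_dominates_general (T m n : ℕ)
    (P : Fin m → Fin n → ℝ) (hP : ∀ i j, P i j ∈ Set.Icc (0 : ℝ) 1)
    (U : ℕ → ℝ) (hU : ∀ t < T, U t ≤ U (t + 1))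
    (hsorted : ∀ i j : Fin m, i ≤ j → ∀ l : Fin n, P j l ≤ P i l)
    (k : ℕ) (hk : k < T)
    (X : Finset (Fin m)) (Y : Finset (Fin n))
    (w : ℕ) (hw : w ≤ k)
    (u v : Fin m)
    (huRank : (Xᶜ.filter (fun x => x ≤ u)).card = T - k)
    (huv : u < v) :
    ∀ j : Fin n, j ∉ Y →
      P v j * gval m n P U (T - (k + 1)) (insert v X) (insert j Y) (w + 1) +
        (1 - P v j) * gval m n P U (T - (k + 1)) (insert v X) (insert j Y) w ≤
      P u j * gval m n P U (T - (k + 1)) (insert u X) (insert j Y) (w + 1) +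
        (1 - P u j) * gval m n P U (T - (k + 1)) (insert u X) (insert j Y) w := by
  intro j _
  have hUT := monotoneOn_Iic_of_le_succ hU
  have hr : T - (k + 1) + 1 ≤ (Xᶜ.filter (· ≤ u)).card := by omega
  have hvu : ∀ w' ≤ w + 1, gval m n P U (T - (k + 1)) (insert v X) (insert j Y) w' ≤
      gval m n P U (T - (k + 1)) (insert u X) (insert j Y) w' := fun w' hw' =>
    gval_insert_le_gval_insert hP hsorted hUT hr huv.le _ (by omega)
  have hwin : gval m n P U (T - (k + 1)) (insert u X) (insert j Y) w ≤
      gval m n P U (T - (k + 1)) (insert u X) (insert j Y) (w + 1) :=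
    gval_le_gval_of_subset hP hUT _ (Nat.le_succ w) (by omega) subset_rfl
      (le_card_compl_insert (hr.trans (card_filter_le _ _)) u)
  exact mul_add_one_sub_mul_le (hP v j).1 (hP v j).2 (hsorted u v huv.le j) (hvu _ le_rfl)
    (hvu _ (by omega)) hwin

/-- Assume `U` is monotone and the rows of `P` are sorted by strength.
At a non-terminal state `(X, Y, w)` after `k < T` rounds, let `u` be the rank-`(T-k)`
remaining player of Team 1 (i.e. the `(T-k)`-th smallest element of `Xᶜ`) and let
`v ∈ Xᶜ` with `v > u` (so `v` is not among the top `T-k` remaining players).  Then in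
the one-round matrix game at this state, the row of `u` dominates the row of `v`:
for every remaining opponent `j`, the expected value of playing `u` against `j` is at
least that of playing `v` against `j`. -/
theorem rank_player_dominates (T m n : ℕ) (hT : 1 ≤ T) (hm : T ≤ m) (hn : T ≤ n)
    (P : Fin m → Fin n → ℝ) (hP : ∀ i j, P i j ∈ Set.Icc (0 : ℝ) 1)
    (U : ℕ → ℝ) (hU : ∀ t < T, U t ≤ U (t + 1))
    (hsorted : ∀ i j : Fin m, i ≤ j → ∀ l : Fin n, P j l ≤ P i l)
    (k : ℕ) (hk : k < T)
    (X : Finset (Fin m)) (Y : Finset (Fin n))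
    (hX : X.card = k) (hY : Y.card = k)
    (w : ℕ) (hw : w ≤ k)
    (u v : Fin m) (hu : u ∉ X)
    (huRank : (Xᶜ.filter (fun x => x ≤ u)).card = T - k)
    (hv : v ∉ X) (huv : u < v) :
    ∀ j : Fin n, j ∉ Y →
      P v j * gval m n P U (T - (k + 1)) (insert v X) (insert j Y) (w + 1) +
        (1 - P v j) * gval m n P U (T - (k + 1)) (insert v X) (insert j Y) w ≤
      P u j * gval m n P U (T - (k + 1)) (insert u X) (insert j Y) (w + 1) +
        (1 - P u j) * gval m n P U (T - (k + 1)) (insert u X) (insert j Y) w :=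
  rank_player_dominates_general T m n P hP U hU hsorted k hk X Y w hw u v huRank huv
end

section
/- Suppose n = T < m and U = U_E. Suppose every redundant player of Team 1 is weaker than each of its first T players: P i l ≥ P j l for all 1 ≤ i ≤ T < j ≤ m and all 1 ≤ l ≤ T. Then V(G(T,P,U_E)) = V(G(T,P',U_E)), where P' is the T×T matrix consisting of the first T rows of P; i.e., Team 1 can abandon players T+1,…,m without losing any utility. -/
/-- The utility function `U_E(t) = t - T/2`. -/
noncomputable def UE (T : ℕ) : ℕ → ℝ := fun t => (t : ℝ) - (T : ℝ) / 2

open Finset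

section BlockSum

variable {α β : Type*} (P : α → β → ℝ)

theorem Finset.sum_sum_erase [DecidableEq α] {R : Type*} [CommRing R] (s : Finset α)
    (f : α → R) :
    ∑ a ∈ s, ∑ b ∈ s.erase a, f b = (#s - 1 : R) * ∑ b ∈ s, f b := by
  rw [sum_congr rfl fun a ha => sum_erase_eq_sub ha, sum_sub_distrib, sum_const, nsmul_eq_mul]
  ring

def blockSum (K : Finset α) (C : Finset β) : ℝ := ∑ i ∈ K, ∑ j ∈ C, P i j

variable {P}

theorem blockSum_erase_left [DecidableEq α] {K : Finset α} {C : Finset β} {i : α}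
    (hi : i ∈ K) :
    blockSum P (K.erase i) C = blockSum P K C - ∑ j ∈ C, P i j :=
  sum_erase_eq_sub hi

theorem blockSum_erase_right [DecidableEq β] {K : Finset α} {C : Finset β} {j : β}
    (hj : j ∈ C) :
    blockSum P K (C.erase j) = blockSum P K C - ∑ i ∈ K, P i j := by
  rw [blockSum, sum_congr rfl fun i _ => sum_erase_eq_sub hj, sum_sub_distrib, blockSum]

variable (P)

theorem sum_blockSum_erase_left [DecidableEq α] (K : Finset α) (C : Finset β) :
    ∑ i ∈ K, blockSum P (K.erase i) C = (#K - 1) * blockSum P K C :=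
  sum_sum_erase K _

theorem sum_blockSum_erase_right [DecidableEq β] (K : Finset α) (C : Finset β) :
    ∑ j ∈ C, blockSum P K (C.erase j) = (#C - 1) * blockSum P K C := by
  simp only [blockSum]
  rw [sum_comm, mul_sum]
  exact sum_congr rfl fun i _ => sum_sum_erase C _

theorem card_mul_le_blockSum {K : Finset α} {C : Finset β} {μ : β → ℝ}
    (hμ : ∀ i ∈ K, ∀ j ∈ C, μ j ≤ P i j) : #K * ∑ j ∈ C, μ j ≤ blockSum P K C := by
  simpa [blockSum] using card_nsmul_le_sum K _ _ fun i hi => sum_le_sum (hμ i hi)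

end BlockSum

section SurplusBound

variable {α β : Type*} (P : α → β → ℝ) (μ : β → ℝ)

/-- Bounds the expected wins in the last `r` rounds against uniformly random opponents from `C`
when the free strong players are `K`: fielding all of `K` would give `blockSum P K C / r`, and
each of the `#K - r` strong rows left unused is worth at least `Σ_C μ`. -/
noncomputable def surplusBound (r : ℕ) (K : Finset α) (C : Finset β) : ℝ :=
  (blockSum P K C - (#K - r) * ∑ j ∈ C, μ j) / r

variable {P μ} {r : ℕ} {K : Finset α} {C : Finset β}

theorem mul_surplusBound_le (hμ : ∀ i ∈ K, ∀ j ∈ C, μ j ≤ P i j) :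
    r * surplusBound P μ r K C ≤ blockSum P K C - (#K - r) * ∑ j ∈ C, μ j := by
  rcases eq_or_ne r 0 with rfl | hr
  · simpa [surplusBound] using card_mul_le_blockSum P hμ
  · rw [surplusBound, mul_div_cancel₀ _ (Nat.cast_ne_zero.2 hr)]

variable (P μ r K C) in
theorem succ_mul_surplusBound :
    (r + 1) * surplusBound P μ (r + 1) K C = blockSum P K C - (#K - (r + 1)) * ∑ j ∈ C, μ j := by
  rw [surplusBound, Nat.cast_succ, mul_div_cancel₀ _ (by positivity)]

variable (P μ K) in
theorem sum_surplusBound_erase [DecidableEq β] (hC : #C = r + 1) :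
    ∑ j ∈ C, surplusBound P μ r K (C.erase j) = r * surplusBound P μ r K C := by
  simp only [surplusBound, ← sum_div, sum_sub_distrib, ← mul_sum, sum_blockSum_erase_right,
    sum_sum_erase, hC]
  push_cast
  ring

theorem surplusBound_step_of_mem [DecidableEq α] [DecidableEq β] {i : α} (hi : i ∈ K)
    (hμ : ∀ i ∈ K, ∀ j ∈ C, μ j ≤ P i j) (hC : #C = r + 1) :
    ∑ j ∈ C, (P i j + surplusBound P μ r (K.erase i) (C.erase j)) ≤
      (r + 1) * surplusBound P μ (r + 1) K C := by
  have h := mul_surplusBound_le (r := r) (K := K.erase i) fun i' hi' =>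
    hμ i' (mem_of_mem_erase hi')
  rw [blockSum_erase_left hi, card_erase_of_mem hi, Nat.cast_pred (card_pos.2 ⟨i, hi⟩)] at h
  rw [sum_add_distrib, sum_surplusBound_erase P μ _ hC, succ_mul_surplusBound]
  linarith

theorem surplusBound_step_of_le [DecidableEq β] {i : α} (hi : ∀ j ∈ C, P i j ≤ μ j)
    (hμ : ∀ i ∈ K, ∀ j ∈ C, μ j ≤ P i j) (hC : #C = r + 1) :
    ∑ j ∈ C, (P i j + surplusBound P μ r K (C.erase j)) ≤
      (r + 1) * surplusBound P μ (r + 1) K C := by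
  have h := mul_surplusBound_le (r := r) hμ
  have hrow : ∑ j ∈ C, P i j ≤ ∑ j ∈ C, μ j := sum_le_sum hi
  rw [sum_add_distrib, sum_surplusBound_erase P μ _ hC, succ_mul_surplusBound]
  linarith

end SurplusBound

section Game

variable {m n : ℕ} (P : Fin m → Fin n → ℝ) (U : ℕ → ℝ)

noncomputable def matchValue (r : ℕ) (X : Finset (Fin m)) (Y : Finset (Fin n)) (w : ℕ)
    (i : Fin m) (j : Fin n) : ℝ :=
  P i j * gval m n P U r (insert i X) (insert j Y) (w + 1) +
    (1 - P i j) * gval m n P U r (insert i X) (insert j Y) w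

theorem gval_succ_s6 (r : ℕ) (X : Finset (Fin m)) (Y : Finset (Fin n)) (w : ℕ) :
    gval m n P U (r + 1) X Y w =
      sSup {v : ℝ | ∃ p : Fin m → ℝ, (∀ i, 0 ≤ p i) ∧ (∀ i ∈ X, p i = 0) ∧ (∑ i, p i) = 1 ∧
        v = sInf {u : ℝ | ∃ j, j ∉ Y ∧ u = ∑ i, p i * matchValue P U r X Y w i j}} :=
  rfl

theorem csInf_le_of_notMem {Y : Finset (Fin n)} (f : Fin n → ℝ) {j : Fin n} (hj : j ∉ Y) :
    sInf {u : ℝ | ∃ j, j ∉ Y ∧ u = f j} ≤ f j :=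
  csInf_le ((Set.finite_range f).subset (by rintro _ ⟨j, -, rfl⟩; exact ⟨j, rfl⟩)).bddBelow
    ⟨j, hj, rfl⟩

variable {P U} {r : ℕ} {X : Finset (Fin m)} {Y : Finset (Fin n)} {w : ℕ}

/-- Team 2 answering uniformly at random. -/
theorem gval_succ_le {i₀ : Fin m} (hi₀ : i₀ ∉ X) (hY : Yᶜ.Nonempty) {c : ℝ}
    (h : ∀ i ∉ X, ∑ j ∈ Yᶜ, matchValue P U r X Y w i j ≤ #Yᶜ * c) :
    gval m n P U (r + 1) X Y w ≤ c := by
  rw [gval_succ_s6]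
  refine csSup_le ⟨_, Pi.single i₀ 1, fun i => ?_, fun i hi => ?_, by simp, rfl⟩ ?_
  · by_cases hi : i = i₀ <;> simp [hi]
  · exact Pi.single_eq_of_ne (ne_of_mem_of_not_mem hi hi₀) _
  rintro _ ⟨p, hp0, hpX, hp1, rfl⟩
  set v := sInf {u : ℝ | ∃ j, j ∉ Y ∧ u = ∑ i, p i * matchValue P U r X Y w i j}
  have hv : ∀ j ∈ Yᶜ, v ≤ ∑ i, p i * matchValue P U r X Y w i j :=
    fun j hj => csInf_le_of_notMem _ (mem_compl.1 hj)
  have hcard : (0 : ℝ) < #Yᶜ := Nat.cast_pos.2 (card_pos.2 hY)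
  refine le_of_mul_le_mul_left ?_ hcard
  calc (#Yᶜ : ℝ) * v ≤ ∑ j ∈ Yᶜ, ∑ i, p i * matchValue P U r X Y w i j := by
        simpa using card_nsmul_le_sum _ _ _ hv
    _ = ∑ i, p i * ∑ j ∈ Yᶜ, matchValue P U r X Y w i j := by
        rw [sum_comm]
        simp_rw [mul_sum]
    _ ≤ ∑ i, p i * (#Yᶜ * c) := by
        refine sum_le_sum fun i _ => ?_
        by_cases hi : i ∈ X
        · simp [hpX i hi]
        · exact mul_le_mul_of_nonneg_left (h i hi) (hp0 i)
    _ = #Yᶜ * c := by rw [← sum_mul, hp1, one_mul]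

/-- Team 1 fielding the members of `A` uniformly at random. -/
theorem le_gval_succ {A : Finset (Fin m)} (hAX : Disjoint A X) (hA : A.Nonempty)
    (hY : Yᶜ.Nonempty) {c : ℝ} (h : ∀ j ∉ Y, #A * c ≤ ∑ i ∈ A, matchValue P U r X Y w i j) :
    c ≤ gval m n P U (r + 1) X Y w := by
  obtain ⟨j₀, hj₀⟩ := hY
  have hbdd : BddAbove {v : ℝ | ∃ p : Fin m → ℝ, (∀ i, 0 ≤ p i) ∧ (∀ i ∈ X, p i = 0) ∧
      (∑ i, p i) = 1 ∧
      v = sInf {u : ℝ | ∃ j, j ∉ Y ∧ u = ∑ i, p i * matchValue P U r X Y w i j}} := by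
    refine ⟨∑ i, |matchValue P U r X Y w i j₀|, ?_⟩
    rintro _ ⟨q, hq0, -, hq1, rfl⟩
    calc _ ≤ ∑ i, q i * matchValue P U r X Y w i j₀ := csInf_le_of_notMem _ (mem_compl.1 hj₀)
      _ ≤ ∑ i, q i * ∑ i', |matchValue P U r X Y w i' j₀| :=
          sum_le_sum fun i _ => mul_le_mul_of_nonneg_left ((le_abs_self _).trans
            (single_le_sum (f := fun i' => |matchValue P U r X Y w i' j₀|)
              (fun i' _ => abs_nonneg _) (mem_univ i))) (hq0 i)
      _ = _ := by rw [← sum_mul, hq1, one_mul]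
  have hcard : (0 : ℝ) < #A := Nat.cast_pos.2 (card_pos.2 hA)
  set p : Fin m → ℝ := fun i => if i ∈ A then (#A : ℝ)⁻¹ else 0
  have hp : ∀ f : Fin m → ℝ, ∑ i, p i * f i = (#A : ℝ)⁻¹ * ∑ i ∈ A, f i := by
    intro f
    simp [p, ite_mul, sum_ite_mem, mul_sum]
  rw [gval_succ_s6]
  refine le_trans ?_ (le_csSup hbdd ⟨p, fun i => ?_, fun i hi => ?_, ?_, rfl⟩)
  · refine le_csInf ⟨_, j₀, mem_compl.1 hj₀, rfl⟩ ?_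
    rintro _ ⟨j, hj, rfl⟩
    rw [hp, le_inv_mul_iff₀ hcard]
    exact h j hj
  · positivity
  · exact if_neg (disjoint_right.1 hAX hi)
  · simpa [hcard.ne'] using hp 1

theorem matchValue_le (hU : ∀ w, U (w + 1) = U w + 1) {i : Fin m} {j : Fin n}
    (hP : P i j ∈ Set.Icc 0 1) {b : ℝ}
    (h : ∀ w', gval m n P U r (insert i X) (insert j Y) w' ≤ U w' + b) :
    matchValue P U r X Y w i j ≤ U w + P i j + b := by
  have h₁ := mul_le_mul_of_nonneg_left (h (w + 1)) hP.1
  have h₀ := mul_le_mul_of_nonneg_left (h w) (sub_nonneg.2 hP.2)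
  rw [hU] at h₁
  unfold matchValue
  linarith

theorem le_matchValue (hU : ∀ w, U (w + 1) = U w + 1) {i : Fin m} {j : Fin n}
    (hP : P i j ∈ Set.Icc 0 1) {b : ℝ}
    (h : ∀ w', U w' + b ≤ gval m n P U r (insert i X) (insert j Y) w') :
    U w + P i j + b ≤ matchValue P U r X Y w i j := by
  have h₁ := mul_le_mul_of_nonneg_left (h (w + 1)) hP.1
  have h₀ := mul_le_mul_of_nonneg_left (h w) (sub_nonneg.2 hP.2)
  rw [hU] at h₁
  unfold matchValue
  linarith

end Game

section UnitIncrements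

variable {m n : ℕ} {P : Fin m → Fin n → ℝ} {U : ℕ → ℝ}

theorem add_blockSum_div_le_gval (hU : ∀ w, U (w + 1) = U w + 1)
    (hP : ∀ i j, P i j ∈ Set.Icc 0 1) :
    ∀ (r : ℕ) (X : Finset (Fin m)) (Y : Finset (Fin n)) (w : ℕ) (A : Finset (Fin m)),
      Disjoint A X → #A = r → #Yᶜ = r → U w + blockSum P A Yᶜ / r ≤ gval m n P U r X Y w := by
  intro r
  induction r with
  | zero => intro X Y w A _ _ _; simp [gval]
  | succ r ih =>
    intro X Y w A hAX hA hY
    refine le_gval_succ hAX (card_pos.1 (by omega)) (card_pos.1 (by omega)) fun j hj => ?_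
    have hjY : j ∈ Yᶜ := mem_compl.2 hj
    have hYj : #(Yᶜ.erase j) = r := by rw [card_erase_of_mem hjY, hY]; rfl
    have hmv : ∀ i ∈ A, U w + P i j + blockSum P (A.erase i) (Yᶜ.erase j) / r ≤
        matchValue P U r X Y w i j := by
      intro i hi
      refine le_matchValue hU (hP i j) fun w' => ?_
      rw [← compl_insert]
      refine ih _ _ w' _ (disjoint_insert_right.2 ⟨notMem_erase i A, hAX.mono_left
        (erase_subset i A)⟩) (by rw [card_erase_of_mem hi, hA]; rfl) (by rwa [compl_insert])
    have hcancel : r * blockSum P A (Yᶜ.erase j) / r = blockSum P A (Yᶜ.erase j) := by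
      rcases eq_or_ne r 0 with rfl | hr
      · simp [card_eq_zero.1 hYj, blockSum]
      · exact mul_div_cancel_left₀ _ (Nat.cast_ne_zero.2 hr)
    calc (#A : ℝ) * (U w + blockSum P A Yᶜ / ↑(r + 1))
        = #A * U w + (∑ i ∈ A, P i j + r * blockSum P A (Yᶜ.erase j) / r) := by
          rw [hcancel, blockSum_erase_right hjY, hA]
          field_simp
          ring
      _ = ∑ i ∈ A, (U w + P i j + blockSum P (A.erase i) (Yᶜ.erase j) / r) := by
          rw [sum_add_distrib, sum_add_distrib, ← sum_div, sum_blockSum_erase_left, sum_const,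
            nsmul_eq_mul, hA]
          push_cast
          ring
      _ ≤ _ := sum_le_sum hmv

theorem gval_le_add_surplusBound (hU : ∀ w, U (w + 1) = U w + 1)
    (hP : ∀ i j, P i j ∈ Set.Icc 0 1) {W : Finset (Fin m)} {μ : Fin n → ℝ}
    (hW : ∀ i ∈ W, ∀ j, μ j ≤ P i j) (hWc : ∀ i ∉ W, ∀ j, P i j ≤ μ j) :
    ∀ (r : ℕ) (X : Finset (Fin m)) (Y : Finset (Fin n)) (w : ℕ), #Yᶜ = r → r ≤ #Xᶜ →
      gval m n P U r X Y w ≤ U w + surplusBound P μ r (W \ X) Yᶜ := by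
  intro r
  induction r with
  | zero => intro X Y w _ _; simp [gval, surplusBound]
  | succ r ih =>
    intro X Y w hY hX
    obtain ⟨i₀, hi₀⟩ := card_pos.1 (by omega : 0 < #Xᶜ)
    have hμ : ∀ i ∈ W \ X, ∀ j ∈ Yᶜ, μ j ≤ P i j := fun i hi j _ => hW i (mem_sdiff.1 hi).1 j
    refine gval_succ_le (mem_compl.1 hi₀) (card_pos.1 (by omega)) fun i hi => ?_
    have hmv : ∀ j ∈ Yᶜ, matchValue P U r X Y w i j ≤
        U w + (P i j + surplusBound P μ r (W \ insert i X) (Yᶜ.erase j)) := by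
      intro j hj
      rw [← add_assoc]
      refine matchValue_le hU (hP i j) fun w' => ?_
      rw [← compl_insert]
      refine ih _ _ w' (by rw [compl_insert, card_erase_of_mem hj, hY]; rfl) ?_
      rw [compl_insert, card_erase_of_mem (mem_compl.2 hi)]
      omega
    have hstep : ∑ j ∈ Yᶜ, (P i j + surplusBound P μ r (W \ insert i X) (Yᶜ.erase j)) ≤
        (r + 1) * surplusBound P μ (r + 1) (W \ X) Yᶜ := by
      by_cases hiW : i ∈ W
      · rw [sdiff_insert]
        exact surplusBound_step_of_mem (mem_sdiff.2 ⟨hiW, hi⟩) hμ hY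
      · rw [sdiff_insert_of_notMem hiW]
        exact surplusBound_step_of_le (fun j _ => hWc i hiW j) hμ hY
    calc ∑ j ∈ Yᶜ, matchValue P U r X Y w i j
        ≤ ∑ j ∈ Yᶜ, (U w + (P i j + surplusBound P μ r (W \ insert i X) (Yᶜ.erase j))) :=
          sum_le_sum hmv
      _ ≤ #Yᶜ * U w + (r + 1) * surplusBound P μ (r + 1) (W \ X) Yᶜ := by
          rw [sum_add_distrib, sum_const, nsmul_eq_mul]
          exact (add_le_add_iff_left _).2 hstep
      _ = #Yᶜ * (U w + surplusBound P μ (r + 1) (W \ X) Yᶜ) := by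
          rw [hY]
          push_cast
          ring

theorem gval_eq_of_separated (hU : ∀ w, U (w + 1) = U w + 1)
    (hP : ∀ i j, P i j ∈ Set.Icc 0 1) {W : Finset (Fin m)} (hWn : #W = n) {μ : Fin n → ℝ}
    (hW : ∀ i ∈ W, ∀ j, μ j ≤ P i j) (hWc : ∀ i ∉ W, ∀ j, P i j ≤ μ j) :
    gval m n P U n ∅ ∅ 0 = U 0 + blockSum P W univ / n := by
  apply le_antisymm
  · have hnm : n ≤ #(∅ : Finset (Fin m))ᶜ := by simpa [← hWn] using card_le_univ W
    simpa [surplusBound, hWn] using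
      gval_le_add_surplusBound hU hP hW hWc n ∅ ∅ 0 (by simp) hnm
  · simpa using add_blockSum_div_le_gval hU hP n ∅ ∅ 0 W (disjoint_empty_right W) hWn (by simp)

end UnitIncrements

theorem abandon_weak_redundant_UE_general (T m : ℕ) (hm : T < m)
    (P : Fin m → Fin T → ℝ) (hP : ∀ i j, P i j ∈ Set.Icc (0 : ℝ) 1)
    (hweak : ∀ i j : Fin m, (i : ℕ) < T → T ≤ (j : ℕ) → ∀ l : Fin T, P j l ≤ P i l) :
    gval m T P (UE T) T ∅ ∅ 0 =
      gval T T (fun i j => P (Fin.castLE hm.le i) j) (UE T) T ∅ ∅ 0 := by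
  have hU : ∀ w, UE T (w + 1) = UE T w + 1 := fun w => by
    simp only [UE, Nat.cast_succ]
    ring
  set ι := Fin.castLEEmb hm.le
  have hstrong : ∀ i ∈ univ.map ι, ∀ j, ⨅ a, P (ι a) j ≤ P i j := by
    intro i hi j
    obtain ⟨a, -, rfl⟩ := mem_map.1 hi
    exact ciInf_le (Set.finite_range _).bddBelow a
  have hredundant : ∀ i ∉ univ.map ι, ∀ j, P i j ≤ ⨅ a, P (ι a) j := by
    intro i hi j
    have : Nonempty (Fin T) := ⟨j⟩
    refine le_ciInf fun a => hweak _ i a.isLt (not_lt.1 fun h => hi ?_) j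
    exact mem_map.2 ⟨⟨i, h⟩, mem_univ _, rfl⟩
  rw [gval_eq_of_separated hU hP (by simp) hstrong hredundant,
    gval_eq_of_separated hU (fun i j => hP _ j) (card_univ.trans (Fintype.card_fin T))
      (μ := 0) (fun i _ j => (hP _ j).1) (by simp), blockSum, blockSum, sum_map]
  rfl

/-- Suppose `n = T < m` and `U = U_E`.  If every redundant player
`T+1, …, m` of Team 1 is weaker than each of its first `T` players, then Team 1 can
abandon its redundant players without losing any utility: the value of the game
equals that of the game played with only the first `T` rows of `P`. -/
theorem abandon_weak_redundant_UE (T m : ℕ) (hT : 1 ≤ T) (hm : T < m)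
    (P : Fin m → Fin T → ℝ) (hP : ∀ i j, P i j ∈ Set.Icc (0 : ℝ) 1)
    (hweak : ∀ i j : Fin m, (i : ℕ) < T → T ≤ (j : ℕ) → ∀ l : Fin T, P j l ≤ P i l) :
    gval m T P (UE T) T ∅ ∅ 0 =
      gval T T (fun i j => P (Fin.castLE hm.le i) j) (UE T) T ∅ ∅ 0 :=
  abandon_weak_redundant_UE_general T m hm P hP hweak
end
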